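/- arXiv:2107.02465 — 4 statements merged into one kernel-verified Lean document; each statement's English description precedes it below -/
import Mathlib

section
/- Let 𝒫 be a nonempty set of Borel probability measures on ℝ^ℕ with sublinear expectation Ê[ξ] := sup_{P∈𝒫} E_P[ξ], and let (X_i) be the coordinate random variables, assumed independent and identically distributed under Ê, with μ̄ := sup_{P∈𝒫} E_P[X_1], μ̲ := inf_{P∈𝒫} E_P[X_1], and Ê[|X_1|²] < ∞. Then for every n ≥ 1, Ê[d²_{[μ̲,μ̄]}(S_n/n)] ≤ σ̄²(X_1)/n, where d_{[μ̲,μ̄]}(x) := inf_{y∈[μ̲,μ̄]} |x − y| and σ̄²(X_1) := inf_{μ∈[μ̲,μ̄]} Ê[|X_1 − μ|²]. -/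
open MeasureTheory

/-- Sublinear expectation associated with a set of probability measures on the
sequence space `ℕ → ℝ`: `Ê[ξ] = sup_{P ∈ Pset} E_P[ξ]`. -/
noncomputable def SE (Pset : Set (Measure (ℕ → ℝ))) (ξ : (ℕ → ℝ) → ℝ) : ℝ :=
  ⨆ P : Pset, ∫ ω, ξ ω ∂(P : Measure (ℕ → ℝ))

/-- Bounded Lipschitz real-valued functions. -/
def BLip {E : Type*} [PseudoMetricSpace E] (φ : E → ℝ) : Prop :=
  (∃ K : NNReal, LipschitzWith K φ) ∧ ∃ M : ℝ, ∀ x, |φ x| ≤ M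

/-- The coordinate sequence is independent under the sublinear expectation `SE Pset`. -/
def IndepCoords (Pset : Set (Measure (ℕ → ℝ))) : Prop :=
  ∀ n : ℕ, 1 ≤ n → ∀ φ : (Fin (n + 1) → ℝ) → ℝ, BLip φ →
    SE Pset (fun ω => φ (fun i => ω (i : ℕ))) =
      SE Pset (fun ω => SE Pset (fun ω' =>
        φ (Fin.snoc (fun i : Fin n => ω (i : ℕ)) (ω' n))))

/-- The coordinate sequence is identically distributed under `SE Pset`. -/
def IdentDistCoords (Pset : Set (Measure (ℕ → ℝ))) : Prop :=
  ∀ i : ℕ, ∀ ψ : ℝ → ℝ, BLip ψ →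
    SE Pset (fun ω => ψ (ω i)) = SE Pset (fun ω => ψ (ω 0))

/-!
Fix `μ₀` and `V` with `E_P[(X₁ - μ₀)²] ≤ V` for all `P ∈ 𝒫`, and let `d_k` be the distance to
`[k μ̲, k μ̄]`. Induction on `k` gives `Ê[d_k(S_k)²] ≤ k V`: given `S_k = s`, let `z` be the point
of `[k μ̲, k μ̄]` nearest to `s`, `t = s - z`, and `c` the projection of `μ₀ + t` onto `[μ̲, μ̄]`.
As `z + c ∈ [(k+1) μ̲, (k+1) μ̄]`, we get `d_{k+1}(s + x)² ≤ (t + x - c)²`; as every mean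
`m = E_P[X₁]` lies in `[μ̲, μ̄]`, the projection inequality `(μ₀ + t - c)(m - c) ≤ 0` gives
`E_P[(t + X₁ - c)²] ≤ t² + E_P[(X₁ - μ₀)²] ≤ d_k(s)² + V`, and independence integrates this
over `S_k`. Independence and identical distribution only see bounded Lipschitz test functions,
so the induction runs on `min (d_k², L)`; monotone convergence removes the truncation, and
`d(S_n / n) = d_n(S_n) / n`.
-/

open ProbabilityTheory Metric Set

lemma sub_projIcc_mul_sub_projIcc_nonpos {a b : ℝ} (hab : a ≤ b) (u : ℝ) {m : ℝ}
    (hm : m ∈ Icc a b) : (u - projIcc a b hab u) * (m - projIcc a b hab u) ≤ 0 := by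
  rcases le_total u a with hu | hu
  · rw [projIcc_of_le_left hab hu]
    exact mul_nonpos_of_nonpos_of_nonneg (by simpa using hu) (by simpa using hm.1)
  rcases le_total b u with hu' | hu'
  · rw [projIcc_of_right_le hab hu']
    exact mul_nonpos_of_nonneg_of_nonpos (by simpa using hu') (by simpa using hm.2)
  · simp [projIcc_of_mem hab ⟨hu, hu'⟩]

lemma sq_add_sub_projIcc_le {a b : ℝ} (hab : a ≤ b) {m : ℝ} (hm : m ∈ Icc a b) (μ₀ t : ℝ) :
    (m + t - projIcc a b hab (μ₀ + t)) ^ 2 ≤ (m - μ₀) ^ 2 + t ^ 2 := by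
  nlinarith [sub_projIcc_mul_sub_projIcc_nonpos hab (μ₀ + t) hm,
    sq_nonneg ((projIcc a b hab (μ₀ + t) : ℝ) - μ₀)]

open scoped Pointwise in
lemma infDist_div_Icc {c : ℝ} (hc : 0 < c) (x a b : ℝ) :
    infDist (x / c) (Icc a b) = infDist x (Icc (c * a) (c * b)) / c := by
  calc infDist (x / c) (Icc a b) = infDist (c • (x / c)) (c • Icc a b) / c := by
        rw [infDist_smul₀ hc.ne', Real.norm_of_nonneg hc.le, mul_div_cancel_left₀ _ hc.ne']
    _ = infDist x (Icc (c * a) (c * b)) / c := by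
        rw [LinearOrderedField.smul_Icc hc, smul_eq_mul, mul_div_cancel₀ x hc.ne']

lemma mem_Icc_ciInf_ciSup_of_abs_le {ι : Type*} {m : ι → ℝ} {C : ℝ} (hC : ∀ i, |m i| ≤ C)
    (i : ι) : m i ∈ Icc (⨅ j, m j) (⨆ j, m j) :=
  ⟨ciInf_le ⟨-C, by rintro _ ⟨j, rfl⟩; exact (abs_le.1 (hC j)).1⟩ i,
    le_ciSup ⟨C, by rintro _ ⟨j, rfl⟩; exact (abs_le.1 (hC j)).2⟩ i⟩

lemma min_sq_eq_sq_min_abs_sqrt {L : ℝ} (hL : 0 ≤ L) (r : ℝ) :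
    min (r ^ 2) L = min |r| √L ^ 2 := by
  rcases le_total (r ^ 2) L with h | h
  · rw [min_eq_left h, min_eq_left (Real.abs_le_sqrt h), sq_abs]
  · rw [min_eq_right h, min_eq_right ((Real.sqrt_le_sqrt h).trans_eq (Real.sqrt_sq_eq_abs r)),
      Real.sq_sqrt hL]

lemma lipschitzWith_min_sq {L : ℝ} (hL : 0 ≤ L) :
    LipschitzWith (2 * √L).toNNReal (fun r : ℝ => min (r ^ 2) L) := by
  have htrunc : LipschitzWith 1 (fun r : ℝ => min |r| √L) :=
    (lipschitzWith_one_norm (E := ℝ)).min_const √L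
  refine LipschitzWith.of_dist_le_mul fun x y => ?_
  simp only [min_sq_eq_sq_min_abs_sqrt hL, Real.dist_eq]
  set p := min |x| √L
  set q := min |y| √L
  have hpq : |p - q| ≤ |x - y| := by simpa [Real.dist_eq] using htrunc.dist_le_mul x y
  have hp : |p + q| ≤ 2 * √L := by
    rw [abs_of_nonneg (by positivity)]
    linarith [min_le_right |x| √L, min_le_right |y| √L]
  rw [Real.coe_toNNReal _ (by positivity), sq_sub_sq, abs_mul]
  exact mul_le_mul hp hpq (abs_nonneg _) (by positivity)

lemma BLip.comp_lipschitzWith {E F : Type*} [PseudoMetricSpace E] [PseudoMetricSpace F]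
    {φ : F → ℝ} (hφ : BLip φ) {f : E → F} {K : NNReal} (hf : LipschitzWith K f) :
    BLip (φ ∘ f) := by
  obtain ⟨⟨Kφ, hφK⟩, M, hM⟩ := hφ
  exact ⟨⟨Kφ * K, hφK.comp hf⟩, M, fun x => hM (f x)⟩

lemma blip_min_sq_infDist {E : Type*} [PseudoMetricSpace E] (s : Set E) {L : ℝ} (hL : 0 ≤ L) :
    BLip (fun x : E => min (infDist x s ^ 2) L) :=
  ⟨⟨_, (lipschitzWith_min_sq hL).comp (lipschitz_infDist_pt s)⟩, L, fun x => by
    rw [abs_of_nonneg (le_min (sq_nonneg _) hL)]; exact min_le_right _ _⟩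

section Probability

variable {Ω : Type*} [MeasurableSpace Ω] {P : Measure Ω} [IsProbabilityMeasure P] {X : Ω → ℝ}

lemma integral_le_of_nonneg_of_le {g : Ω → ℝ} (hg0 : 0 ≤ g) {C : ℝ} (hgC : ∀ ω, g ω ≤ C) :
    ∫ ω, g ω ∂P ≤ C :=
  (integral_mono_of_nonneg (.of_forall hg0) (integrable_const C) (.of_forall hgC)).trans_eq
    (by simp)

lemma integral_sub_const_sq (hX : MemLp X 2 P) (c : ℝ) :
    ∫ ω, (X ω - c) ^ 2 ∂P = Var[X; P] + (P[X] - c) ^ 2 := by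
  have hXc : MemLp (fun ω => X ω - c) 2 P := hX.sub (memLp_const c)
  rw [← variance_sub_const hX.aestronglyMeasurable c, variance_eq_sub hXc,
    integral_sub (hX.integrable one_le_two) (integrable_const c)]
  simp

lemma sq_integral_le_integral_sq (hX : MemLp X 2 P) : P[X] ^ 2 ≤ ∫ ω, X ω ^ 2 ∂P := by
  have h := integral_sub_const_sq hX 0
  simp only [sub_zero] at h
  linarith [variance_nonneg X P]

lemma integral_sub_const_sq_le (hX : MemLp X 2 P) (c : ℝ) :
    ∫ ω, (X ω - c) ^ 2 ∂P ≤ 2 * ∫ ω, X ω ^ 2 ∂P + 2 * c ^ 2 := by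
  have h := integral_sub_const_sq hX 0
  simp only [sub_zero] at h
  rw [integral_sub_const_sq hX, h]
  nlinarith [variance_nonneg X P, sq_nonneg (P[X] + c)]

lemma integral_add_sub_projIcc_sq_le {a b : ℝ} (hab : a ≤ b) (hX : MemLp X 2 P)
    (hmean : P[X] ∈ Icc a b) (μ₀ t : ℝ) :
    ∫ ω, (t + X ω - projIcc a b hab (μ₀ + t)) ^ 2 ∂P ≤ t ^ 2 + ∫ ω, (X ω - μ₀) ^ 2 ∂P := by
  have key := sq_add_sub_projIcc_le hab hmean μ₀ t
  set c : ℝ := ↑(projIcc a b hab (μ₀ + t))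
  have hshift : ∀ ω, (t + X ω - c) ^ 2 = (X ω - (c - t)) ^ 2 := fun ω => by ring
  simp_rw [hshift, integral_sub_const_sq hX]
  nlinarith [key]

end Probability

lemma integrable_min_sq_infDist {α : Type*} [MeasurableSpace α] {P : Measure α}
    [IsFiniteMeasure P] {r : α → ℝ} (hr : Measurable r) (s : Set ℝ) {L : ℝ} (hL : 0 ≤ L) :
    Integrable (fun x => min (infDist (r x) s ^ 2) L) P :=
  .of_bound (by fun_prop : Measurable _).aestronglyMeasurable L
    (.of_forall fun x => by
      rw [Real.norm_of_nonneg (le_min (sq_nonneg _) hL)]; exact min_le_right _ _)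

lemma integral_le_of_forall_integral_min_le {α : Type*} [MeasurableSpace α] {P : Measure α}
    [IsFiniteMeasure P] {g : α → ℝ} (hg : Measurable g) (hg0 : 0 ≤ g) {c : ℝ}
    (h : ∀ j : ℕ, ∫ x, min (g x) j ∂P ≤ c) : ∫ x, g x ∂P ≤ c := by
  have hc : 0 ≤ c := by
    have h0 := h 0
    rwa [Nat.cast_zero, show (fun x => min (g x) 0) = fun _ => 0 from
      funext fun x => min_eq_right (hg0 x), integral_zero] at h0
  have hmin_int : ∀ j : ℕ, Integrable (fun x => min (g x) j) P := fun j =>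
    .of_bound (hg.min measurable_const).aestronglyMeasurable j
      (.of_forall fun x => by
        rw [Real.norm_of_nonneg (le_min (hg0 x) j.cast_nonneg)]; exact min_le_right _ _)
  have hsup : ∀ x, ⨆ j : ℕ, ENNReal.ofReal (min (g x) j) = ENNReal.ofReal (g x) := fun x =>
    le_antisymm (iSup_le fun j => ENNReal.ofReal_le_ofReal (min_le_left _ _))
      (le_iSup_of_le ⌈g x⌉₊ (by rw [min_eq_left (Nat.le_ceil _)]))
  have hmono : Monotone fun (j : ℕ) x => ENNReal.ofReal (min (g x) j) := fun i j hij x =>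
    ENNReal.ofReal_le_ofReal (min_le_min_left _ (Nat.cast_le.2 hij))
  rw [integral_eq_lintegral_of_nonneg_ae (.of_forall hg0) hg.aestronglyMeasurable,
    ← ENNReal.toReal_ofReal hc]
  refine ENNReal.toReal_mono ENNReal.ofReal_ne_top ?_
  simp_rw [← hsup]
  rw [lintegral_iSup (fun j => (hg.min measurable_const).ennreal_ofReal) hmono]
  refine iSup_le fun j => ?_
  rw [← ofReal_integral_eq_lintegral_ofReal (hmin_int j)
    (.of_forall fun x => le_min (hg0 x) j.cast_nonneg)]
  exact ENNReal.ofReal_le_ofReal (h j)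

section SublinearExpectation

variable {Pset : Set (Measure (ℕ → ℝ))} {f : (ℕ → ℝ) → ℝ}

lemma SE_le_of_forall_integral_le (hne : Pset.Nonempty) {c : ℝ}
    (h : ∀ P ∈ Pset, ∫ ω, f ω ∂P ≤ c) : SE Pset f ≤ c :=
  have := hne.to_subtype
  ciSup_le fun P => h P P.2

lemma integral_le_SE {P : Measure (ℕ → ℝ)} (hP : P ∈ Pset) {C : ℝ}
    (hC : ∀ Q ∈ Pset, ∫ ω, f ω ∂Q ≤ C) : ∫ ω, f ω ∂P ≤ SE Pset f :=
  le_ciSup (f := fun Q : Pset => ∫ ω, f ω ∂(Q : Measure (ℕ → ℝ)))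
    ⟨C, by rintro _ ⟨Q, rfl⟩; exact hC Q Q.2⟩ ⟨P, hP⟩

lemma integral_le_SE_of_nonneg_of_le (hprob : ∀ P ∈ Pset, IsProbabilityMeasure P)
    {P : Measure (ℕ → ℝ)} (hP : P ∈ Pset) (hf0 : 0 ≤ f) {C : ℝ} (hfC : ∀ ω, f ω ≤ C) :
    ∫ ω, f ω ∂P ≤ SE Pset f :=
  integral_le_SE hP fun Q hQ => have := hprob Q hQ; integral_le_of_nonneg_of_le hf0 hfC

lemma SE_nonneg (hne : Pset.Nonempty) (hprob : ∀ P ∈ Pset, IsProbabilityMeasure P)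
    (hf0 : 0 ≤ f) {C : ℝ} (hfC : ∀ ω, f ω ≤ C) : 0 ≤ SE Pset f := by
  obtain ⟨P, hP⟩ := hne
  have := hprob P hP
  exact (integral_nonneg hf0).trans (integral_le_SE_of_nonneg_of_le hprob hP hf0 hfC)

lemma SE_const (hne : Pset.Nonempty) (hprob : ∀ P ∈ Pset, IsProbabilityMeasure P) (c : ℝ) :
    SE Pset (fun _ => c) = c := by
  have := hne.to_subtype
  have hc : ∀ P : Pset, ∫ _ω, c ∂(P : Measure (ℕ → ℝ)) = c := fun P => by
    have := hprob P P.2; simp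
  simp only [SE, hc, ciSup_const]

lemma SE_comp_sum_range_succ (hne : Pset.Nonempty)
    (hprob : ∀ P ∈ Pset, IsProbabilityMeasure P) (hindep : IndepCoords Pset) {φ : ℝ → ℝ}
    (hφ : BLip φ) (k : ℕ) :
    SE Pset (fun ω => φ (∑ i ∈ Finset.range (k + 1), ω i)) =
      SE Pset (fun ω => SE Pset (fun ω' => φ (∑ i ∈ Finset.range k, ω i + ω' k))) := by
  rcases Nat.eq_zero_or_pos k with rfl | hk
  · simp [SE_const hne hprob]
  · have hsum :=
      (∑ i : Fin (k + 1), ContinuousLinearMap.proj (R := ℝ) (φ := fun _ => ℝ) i).lipschitz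
    simpa [Fin.sum_univ_castSucc, Fin.sum_univ_eq_sum_range, Finset.sum_range_succ] using
      hindep k hk _ (hφ.comp_lipschitzWith hsum)

end SublinearExpectation

section Main

variable {Pset : Set (Measure (ℕ → ℝ))} {a b μ₀ V : ℝ}

lemma SE_min_sq_infDist_add_coord_le (hne : Pset.Nonempty)
    (hprob : ∀ P ∈ Pset, IsProbabilityMeasure P) (hid : IdentDistCoords Pset)
    (hL2 : ∀ P ∈ Pset, MemLp (fun ω : ℕ → ℝ => ω 0) 2 P) (hab : a ≤ b)
    (hmean : ∀ P ∈ Pset, ∫ ω, ω 0 ∂P ∈ Icc a b)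
    (hV : ∀ P ∈ Pset, ∫ ω, (ω 0 - μ₀) ^ 2 ∂P ≤ V) {A B : ℝ} (hAB : A ≤ B) {L : ℝ} (hL : 0 ≤ L)
    (i : ℕ) (s : ℝ) :
    SE Pset (fun ω => min (infDist (s + ω i) (Icc (A + a) (B + b)) ^ 2) L) ≤
      min (infDist s (Icc A B) ^ 2) L + V := by
  obtain ⟨z, hz, hsz⟩ := isCompact_Icc.exists_infDist_eq_dist (nonempty_Icc.2 hAB) s
  set t := s - z
  set c : ℝ := ↑(projIcc a b hab (μ₀ + t))
  have hdist : ∀ y, infDist (s + y) (Icc (A + a) (B + b)) ^ 2 ≤ (t + y - c) ^ 2 := fun y => by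
    have hzc : z + c ∈ Icc (A + a) (B + b) :=
      ⟨add_le_add hz.1 (projIcc a b hab _).2.1, add_le_add hz.2 (projIcc a b hab _).2.2⟩
    calc infDist (s + y) (Icc (A + a) (B + b)) ^ 2 ≤ dist (s + y) (z + c) ^ 2 :=
          pow_le_pow_left₀ infDist_nonneg (infDist_le_dist_of_mem hzc) 2
      _ = (t + y - c) ^ 2 := by rw [Real.dist_eq, sq_abs]; ring
  have hψ : BLip (fun y : ℝ => min (infDist (s + y) (Icc (A + a) (B + b)) ^ 2) L) :=
    (blip_min_sq_infDist _ hL).comp_lipschitzWith (isometry_add_left s).lipschitz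
  rw [hid i _ hψ]
  refine SE_le_of_forall_integral_le hne fun P hP => ?_
  have := hprob P hP
  have hV0 : 0 ≤ V := (integral_nonneg fun ω => sq_nonneg _).trans (hV P hP)
  have hsq : ∫ ω, min (infDist (s + ω 0) (Icc (A + a) (B + b)) ^ 2) L ∂P ≤ t ^ 2 + V :=
    calc ∫ ω, min (infDist (s + ω 0) (Icc (A + a) (B + b)) ^ 2) L ∂P
        ≤ ∫ ω, (t + ω 0 - c) ^ 2 ∂P :=
          integral_mono_of_nonneg (.of_forall fun ω => le_min (sq_nonneg _) hL)
            ((((memLp_const t).add (hL2 P hP)).sub (memLp_const c)).integrable_sq)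
            (.of_forall fun ω => (min_le_left _ _).trans (hdist _))
      _ ≤ t ^ 2 + ∫ ω, (ω 0 - μ₀) ^ 2 ∂P :=
          integral_add_sub_projIcc_sq_le hab (hL2 P hP) (hmean P hP) μ₀ t
      _ ≤ t ^ 2 + V := by linarith [hV P hP]
  calc ∫ ω, min (infDist (s + ω 0) (Icc (A + a) (B + b)) ^ 2) L ∂P
      ≤ min (t ^ 2 + V) L := le_min hsq
        (integral_le_of_nonneg_of_le (fun ω => le_min (sq_nonneg _) hL) fun ω => min_le_right _ _)
    _ ≤ min (t ^ 2) L + V := by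
        rw [← min_add_add_right]; exact min_le_min_left _ (le_add_of_nonneg_right hV0)
    _ = min (infDist s (Icc A B) ^ 2) L + V := by rw [hsz, Real.dist_eq, sq_abs]

lemma SE_min_sq_infDist_sum_le (hne : Pset.Nonempty)
    (hprob : ∀ P ∈ Pset, IsProbabilityMeasure P) (hindep : IndepCoords Pset)
    (hid : IdentDistCoords Pset) (hL2 : ∀ P ∈ Pset, MemLp (fun ω : ℕ → ℝ => ω 0) 2 P)
    (hab : a ≤ b) (hmean : ∀ P ∈ Pset, ∫ ω, ω 0 ∂P ∈ Icc a b)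
    (hV : ∀ P ∈ Pset, ∫ ω, (ω 0 - μ₀) ^ 2 ∂P ≤ V) {L : ℝ} (hL : 0 ≤ L) (k : ℕ) :
    SE Pset (fun ω => min (infDist (∑ i ∈ Finset.range k, ω i) (Icc (k * a) (k * b)) ^ 2) L) ≤
      k * V := by
  induction k with
  | zero =>
    refine SE_le_of_forall_integral_le hne fun P _ => ?_
    simp [min_eq_left hL]
  | succ k ih =>
    set g : (ℕ → ℝ) → ℝ :=
      fun ω => min (infDist (∑ i ∈ Finset.range k, ω i) (Icc (k * a) (k * b)) ^ 2) L
    have hg0 : 0 ≤ g := fun ω => le_min (sq_nonneg _) hL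
    have hIcc : Icc (((k + 1 : ℕ) : ℝ) * a) ((k + 1 : ℕ) * b) = Icc (k * a + a) (k * b + b) := by
      push_cast; ring_nf
    rw [hIcc, SE_comp_sum_range_succ hne hprob hindep (blip_min_sq_infDist _ hL) k]
    refine SE_le_of_forall_integral_le hne fun P hP => ?_
    have := hprob P hP
    have hg_int : Integrable g P := integrable_min_sq_infDist (by fun_prop) _ hL
    calc ∫ ω, SE Pset (fun ω' => min (infDist (∑ i ∈ Finset.range k, ω i + ω' k)
            (Icc (k * a + a) (k * b + b)) ^ 2) L) ∂P
        ≤ ∫ ω, (g ω + V) ∂P :=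
          -- the integrand need not be measurable, which `integral_mono_of_nonneg` allows
          integral_mono_of_nonneg
            (.of_forall fun ω => SE_nonneg hne hprob (fun ω' => le_min (sq_nonneg _) hL)
              fun ω' => min_le_right _ _)
            (hg_int.add (integrable_const V))
            (.of_forall fun ω => SE_min_sq_infDist_add_coord_le hne hprob hid hL2 hab hmean hV
              (mul_le_mul_of_nonneg_left hab k.cast_nonneg) hL k _)
      _ = ∫ ω, g ω ∂P + V := by
          rw [integral_add hg_int (integrable_const V), integral_const, probReal_univ, one_smul]
      _ ≤ SE Pset g + V := by
          gcongr; exact integral_le_SE_of_nonneg_of_le hprob hP hg0 fun ω => min_le_right _ _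
      _ ≤ ((k + 1 : ℕ) : ℝ) * V := by push_cast; linarith

lemma SE_sq_infDist_sum_div_le (hne : Pset.Nonempty)
    (hprob : ∀ P ∈ Pset, IsProbabilityMeasure P) (hindep : IndepCoords Pset)
    (hid : IdentDistCoords Pset) (hL2 : ∀ P ∈ Pset, MemLp (fun ω : ℕ → ℝ => ω 0) 2 P)
    (hab : a ≤ b) (hmean : ∀ P ∈ Pset, ∫ ω, ω 0 ∂P ∈ Icc a b)
    (hV : ∀ P ∈ Pset, ∫ ω, (ω 0 - μ₀) ^ 2 ∂P ≤ V) {n : ℕ} (hn : 0 < n) :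
    SE Pset (fun ω => infDist ((∑ i ∈ Finset.range n, ω i) / n) (Icc a b) ^ 2) ≤ V / n := by
  have hn' : (0 : ℝ) < n := Nat.cast_pos.2 hn
  refine SE_le_of_forall_integral_le hne fun P hP => ?_
  have := hprob P hP
  have hsum : ∫ ω, infDist (∑ i ∈ Finset.range n, ω i) (Icc (n * a) (n * b)) ^ 2 ∂P ≤ n * V :=
    integral_le_of_forall_integral_min_le
      (((continuous_infDist_pt _).measurable.comp (by fun_prop)).pow_const 2)
      (fun ω => sq_nonneg _) fun j =>
        (integral_le_SE_of_nonneg_of_le hprob hP (fun ω => le_min (sq_nonneg _) j.cast_nonneg)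
          fun ω => min_le_right _ _).trans
        (SE_min_sq_infDist_sum_le hne hprob hindep hid hL2 hab hmean hV j.cast_nonneg n)
  simp_rw [infDist_div_Icc hn', div_pow, integral_div]
  calc (∫ ω, infDist (∑ i ∈ Finset.range n, ω i) (Icc (n * a) (n * b)) ^ 2 ∂P) / (n : ℝ) ^ 2
      ≤ n * V / (n : ℝ) ^ 2 := by gcongr
    _ = V / n := by field_simp

end Main

/-- Law of large numbers with rate of convergence for the squared distance
to the interval `[μ̲, μ̄]` (improvement of Fang et al.). -/
theorem peng_lln_dist_sq_rate
    (Pset : Set (Measure (ℕ → ℝ))) (hne : Pset.Nonempty)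
    (hprob : ∀ P ∈ Pset, IsProbabilityMeasure P)
    (hindep : IndepCoords Pset) (hid : IdentDistCoords Pset)
    (hint : ∀ P ∈ Pset, Integrable (fun ω : ℕ → ℝ => |ω 0| ^ 2) P)
    (hmom : BddAbove ((fun P : Measure (ℕ → ℝ) => ∫ ω, |ω 0| ^ 2 ∂P) '' Pset))
    (μbar μlow : ℝ)
    (hμbar : (⨆ P : Pset, ∫ ω, ω 0 ∂(P : Measure (ℕ → ℝ))) = μbar)
    (hμlow : (⨅ P : Pset, ∫ ω, ω 0 ∂(P : Measure (ℕ → ℝ))) = μlow)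
    (n : ℕ) (hn : 1 ≤ n) :
    SE Pset (fun ω =>
        (Metric.infDist ((∑ i ∈ Finset.range n, ω i) / n) (Set.Icc μlow μbar)) ^ 2) ≤
      sInf ((fun μ : ℝ => SE Pset (fun ω => |ω 0 - μ| ^ 2)) '' Set.Icc μlow μbar) / n := by
  obtain ⟨M, hM⟩ := hmom
  have hL2 : ∀ P ∈ Pset, MemLp (fun ω : ℕ → ℝ => ω 0) 2 P := fun P hP =>
    (memLp_two_iff_integrable_sq (measurable_pi_apply 0).aestronglyMeasurable).2
      (by simpa only [sq_abs] using hint P hP)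
  have hM' : ∀ P ∈ Pset, ∫ ω, ω 0 ^ 2 ∂P ≤ M := fun P hP => by
    simpa only [sq_abs] using hM ⟨P, hP, rfl⟩
  have hmean : ∀ P ∈ Pset, ∫ ω, ω 0 ∂P ∈ Icc μlow μbar := by
    have hbdd : ∀ Q : Pset, |∫ ω, ω 0 ∂(Q : Measure (ℕ → ℝ))| ≤ √M := fun Q => by
      have := hprob Q Q.2
      exact Real.abs_le_sqrt ((sq_integral_le_integral_sq (hL2 Q Q.2)).trans (hM' Q Q.2))
    exact fun P hP => hμlow ▸ hμbar ▸ mem_Icc_ciInf_ciSup_of_abs_le hbdd ⟨P, hP⟩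
  obtain ⟨P₀, hP₀⟩ := hne
  have hab : μlow ≤ μbar := (hmean P₀ hP₀).1.trans (hmean P₀ hP₀).2
  have hn' : (0 : ℝ) < n := Nat.cast_pos.2 hn
  rw [le_div_iff₀ hn']
  refine le_csInf ((nonempty_Icc.2 hab).image _) ?_
  rintro _ ⟨μ, -, rfl⟩
  rw [← le_div_iff₀ hn']
  dsimp only
  refine SE_sq_infDist_sum_div_le (μ₀ := μ) ⟨P₀, hP₀⟩ hprob hindep hid hL2 hab hmean
    (fun P hP => ?_) hn
  have hC : ∀ Q ∈ Pset, ∫ ω, |ω 0 - μ| ^ 2 ∂Q ≤ 2 * M + 2 * μ ^ 2 := fun Q hQ => by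
    have := hprob Q hQ
    simpa only [sq_abs] using
      (integral_sub_const_sq_le (hL2 Q hQ) μ).trans (by linarith [hM' Q hQ])
  simpa only [sq_abs] using integral_le_SE hP hC
end

section
/- Let X_1,…,X_n be independent integrable random variables on a probability space (Ω, F, P) with E[X_i] = μ for all i, and suppose E[|X_i|^{1+α}] ≤ C_α for some α ∈ (0,1] and all i ≤ n. Then for every Lipschitz function φ : ℝ → ℝ with Lipschitz constant L, |E[φ(S_n/n)] − φ(μ)| ≤ L · (4C_α/n^α)^{1/(1+α)}, where S_n := X_1 + ⋯ + X_n. -/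
/-!
Write `p = 1 + α ∈ [1, 2]`. By the Lipschitz bound and Jensen's inequality,
`|E φ(S_n/n) - φ(μ)| ≤ L E|S_n/n - μ| ≤ L (E|S_n/n - μ|^p)^(1/p)`, so it suffices to show
`E|S_n - nμ|^p ≤ 4 n C_α`. Everything rests on the pointwise bound
`|x + y|^p ≤ |x|^p + p sgn(x)|x|^(p-1) y + 2|y|^p`, which follows from the convexity of `t^p` and
the `(p-1)`-Hölder continuity of `t^(p-1)` on `[0, ∞)`. Taking `x` independent of `y` and `y`
centred kills the middle term in expectation, and induction gives the von Bahr–Esseen inequality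
`E|∑ Y_i|^p ≤ 2 ∑ E|Y_i|^p`; taking `x = -μ` constant gives `E|X - μ|^p ≤ 2 E|X|^p`.
-/

open MeasureTheory ProbabilityTheory Real

namespace Real

variable {p q a b x y : ℝ}

lemma mul_rpow_sub_one_mul_sub_le (ha : 0 ≤ a) (hb : 0 ≤ b) (hp : 1 ≤ p) :
    p * a ^ (p - 1) * (b - a) ≤ b ^ p - a ^ p := by
  rcases ha.eq_or_lt with rfl | ha
  · rcases hp.eq_or_lt with rfl | hp
    · simp
    · rw [zero_rpow (by linarith), zero_rpow (by linarith)]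
      simpa using rpow_nonneg hb p
  · have hbern := one_add_mul_self_le_rpow_one_add (s := b / a - 1)
      (by linarith [div_nonneg hb ha.le]) hp
    rw [add_sub_cancel, div_rpow hb ha.le] at hbern
    calc p * a ^ (p - 1) * (b - a) = a ^ p * (p * (b / a - 1)) := by
          rw [rpow_sub_one ha.ne']; field_simp
      _ ≤ a ^ p * (b ^ p / a ^ p - 1) := by gcongr; linarith
      _ = b ^ p - a ^ p := by field_simp

lemma abs_rpow_sub_rpow_le (ha : 0 ≤ a) (hb : 0 ≤ b) (hq0 : 0 ≤ q) (hq1 : q ≤ 1) :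
    |a ^ q - b ^ q| ≤ |a - b| ^ q := by
  wlog hba : b ≤ a generalizing a b
  · rw [abs_sub_comm, abs_sub_comm a]
    exact this hb ha (le_of_not_ge hba)
  have hmono : b ^ q ≤ a ^ q := rpow_le_rpow hb hba hq0
  have hsub : a ^ q ≤ b ^ q + (a - b) ^ q := by
    simpa using rpow_add_le_add_rpow hb (sub_nonneg.2 hba) hq0 hq1
  rw [abs_of_nonneg (sub_nonneg.2 hmono), abs_of_nonneg (sub_nonneg.2 hba)]
  linarith

lemma rpow_sub_one_mul_self (hx : 0 ≤ x) (hp : p ≠ 0) : x ^ (p - 1) * x = x ^ p := by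
  rw [← rpow_add_one' hx (by simpa using hp), sub_add_cancel]

lemma abs_add_rpow_le_of_nonneg (hp1 : 1 ≤ p) (hp2 : p ≤ 2) (hx : 0 ≤ x) (y : ℝ) :
    |x + y| ^ p ≤ x ^ p + p * x ^ (p - 1) * y + 2 * |y| ^ p := by
  rcases le_or_gt 0 (x + y) with hxy | hxy
  · have htan := mul_rpow_sub_one_mul_sub_le hxy hx hp1
    have hhol : ((x + y) ^ (p - 1) - x ^ (p - 1)) * y ≤ |y| ^ p := by
      calc _ ≤ |(x + y) ^ (p - 1) - x ^ (p - 1)| * |y| := by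
            rw [← abs_mul]; exact le_abs_self _
        _ ≤ |y| ^ (p - 1) * |y| := by
            gcongr
            simpa using abs_rpow_sub_rpow_le hxy hx (by linarith) (by linarith)
        _ = |y| ^ p := rpow_sub_one_mul_self (abs_nonneg y) (by linarith)
    have := mul_le_mul_of_nonneg_left hhol (by linarith : 0 ≤ p)
    have := mul_nonneg (sub_nonneg.2 hp2) (rpow_nonneg (abs_nonneg y) p)
    rw [abs_of_nonneg hxy]
    linarith
  · have hy : x ≤ -y := by linarith
    have htan := mul_rpow_sub_one_mul_sub_le hx (hx.trans hy) hp1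
    have hle : |x + y| ^ p ≤ (-y) ^ p := by
      apply rpow_le_rpow (abs_nonneg _) _ (by linarith)
      rw [abs_of_neg hxy]; linarith
    have hxp : p * x ^ (p - 1) * x = p * x ^ p := by
      rw [mul_assoc, rpow_sub_one_mul_self hx (by linarith)]
    have := mul_nonneg (sub_nonneg.2 hp2) (rpow_nonneg hx p)
    rw [abs_of_neg (by linarith : y < 0)]
    linarith

end Real

section SignedRpow

variable {p q x : ℝ}

/-- `sign x * |x| ^ q`; thus `p * signedRpow (p - 1)` is the derivative of `|x| ^ p`. -/
noncomputable def signedRpow (q x : ℝ) : ℝ := |x| ^ (q - 1) * x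

lemma signedRpow_of_pos (hx : 0 < x) : signedRpow q x = x ^ q := by
  rw [signedRpow, abs_of_pos hx, ← rpow_add_one hx.ne', sub_add_cancel]

lemma signedRpow_neg : signedRpow q (-x) = -signedRpow q x := by
  simp [signedRpow]

lemma abs_signedRpow_le : |signedRpow q x| ≤ |x| ^ q := by
  rcases eq_or_ne x 0 with rfl | hx
  · simpa [signedRpow] using rpow_nonneg le_rfl q
  · rw [signedRpow, abs_mul, abs_of_nonneg (rpow_nonneg (abs_nonneg x) _),
      ← rpow_add_one (abs_ne_zero.2 hx), sub_add_cancel]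

lemma signedRpow_mul_self (hq : q + 1 ≠ 0) : signedRpow q x * x = |x| ^ (q + 1) := by
  rcases eq_or_ne x 0 with rfl | hx
  · simp [signedRpow, zero_rpow hq]
  · rw [signedRpow, mul_assoc, ← abs_mul_abs_self, ← mul_assoc,
      ← rpow_add_one (abs_ne_zero.2 hx), sub_add_cancel, ← rpow_add_one (abs_ne_zero.2 hx)]

@[fun_prop]
lemma measurable_signedRpow : Measurable (signedRpow q) := by
  unfold signedRpow; fun_prop

lemma abs_add_rpow_le (hp1 : 1 ≤ p) (hp2 : p ≤ 2) (x y : ℝ) :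
    |x + y| ^ p ≤ |x| ^ p + p * signedRpow (p - 1) x * y + 2 * |y| ^ p := by
  rcases lt_trichotomy x 0 with hx | rfl | hx
  · have h := abs_add_rpow_le_of_nonneg hp1 hp2 (neg_nonneg.2 hx.le) (-y)
    have hψ : signedRpow (p - 1) x = -(-x) ^ (p - 1) := by
      simpa [signedRpow_of_pos (neg_pos.2 hx)] using signedRpow_neg (q := p - 1) (x := -x)
    rw [← neg_add, abs_neg, abs_neg] at h
    rw [hψ, abs_of_neg hx]
    linarith
  · simp only [signedRpow, zero_add, abs_zero, zero_rpow (by linarith : p ≠ 0), mul_zero]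
    linarith [rpow_nonneg (abs_nonneg y) p]
  · rw [signedRpow_of_pos hx, abs_of_pos hx]
    exact abs_add_rpow_le_of_nonneg hp1 hp2 hx.le y

end SignedRpow

section Moments

variable {Ω : Type*} [MeasurableSpace Ω] {P : Measure Ω} {p : ℝ}

lemma memLp_ofReal_iff_integrable_abs_rpow {f : Ω → ℝ} (hf : AEStronglyMeasurable f P)
    (hp : 0 < p) : MemLp f (ENNReal.ofReal p) P ↔ Integrable (fun ω => |f ω| ^ p) P := by
  rw [← integrable_norm_rpow_iff hf (by simpa using hp) ENNReal.ofReal_ne_top,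
    ENNReal.toReal_ofReal hp.le]
  rfl

variable [IsProbabilityMeasure P]

lemma integral_abs_le_rpow_integral_abs_rpow (hp : 1 ≤ p) {f : Ω → ℝ}
    (hf : MemLp f (ENNReal.ofReal p) P) :
    ∫ ω, |f ω| ∂P ≤ (∫ ω, |f ω| ^ p ∂P) ^ (1 / p) := by
  have hp0 : 0 < p := by linarith
  have hjensen : (∫ ω, |f ω| ∂P) ^ p ≤ ∫ ω, |f ω| ^ p ∂P :=
    (convexOn_rpow hp).map_integral_le (continuous_rpow_const hp0.le).continuousOn isClosed_Ici
      (ae_of_all _ fun ω => abs_nonneg (f ω)) (hf.integrable (by simpa using hp)).abs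
      ((memLp_ofReal_iff_integrable_abs_rpow hf.1 hp0).1 hf)
  rw [one_div, le_rpow_inv_iff_of_pos (integral_nonneg fun ω => abs_nonneg _)
    (integral_nonneg fun ω => by positivity) hp0]
  exact hjensen

lemma integral_abs_add_rpow_le (hp1 : 1 ≤ p) (hp2 : p ≤ 2) {S Y : Ω → ℝ}
    (hS : MemLp S (ENNReal.ofReal p) P) (hY : MemLp Y (ENNReal.ofReal p) P)
    (hSY : IndepFun S Y P) :
    ∫ ω, |S ω + Y ω| ^ p ∂P ≤
      ∫ ω, |S ω| ^ p ∂P + p * (∫ ω, signedRpow (p - 1) (S ω) ∂P) * ∫ ω, Y ω ∂P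
        + 2 * ∫ ω, |Y ω| ^ p ∂P := by
  have hp0 : 0 < p := by linarith
  have hSp := (memLp_ofReal_iff_integrable_abs_rpow hS.1 hp0).1 hS
  have hYp := (memLp_ofReal_iff_integrable_abs_rpow hY.1 hp0).1 hY
  have hSYp := (memLp_ofReal_iff_integrable_abs_rpow (hS.add hY).1 hp0).1 (hS.add hY)
  have hψS : Integrable (fun ω => signedRpow (p - 1) (S ω)) P :=
    (integrable_norm_rpow_of_le hS.1 (sub_nonneg.2 hp1) hp0.le (by linarith) hSp).mono'
      (measurable_signedRpow.comp_aemeasurable hS.1.aemeasurable).aestronglyMeasurable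
      (ae_of_all _ fun ω => abs_signedRpow_le)
  have hψSY : IndepFun (fun ω => signedRpow (p - 1) (S ω)) Y P :=
    hSY.comp measurable_signedRpow measurable_id
  have hprod : Integrable (fun ω => p * (signedRpow (p - 1) (S ω) * Y ω)) P :=
    (hψSY.integrable_mul hψS (hY.integrable (by simpa using hp1))).const_mul p
  have hSprod : Integrable (fun ω => |S ω| ^ p + p * (signedRpow (p - 1) (S ω) * Y ω)) P :=
    hSp.add hprod
  calc ∫ ω, |S ω + Y ω| ^ p ∂P
      ≤ ∫ ω, |S ω| ^ p + p * (signedRpow (p - 1) (S ω) * Y ω) + 2 * |Y ω| ^ p ∂P :=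
        integral_mono hSYp (hSprod.add (hYp.const_mul 2)) fun ω => by
          linarith [abs_add_rpow_le hp1 hp2 (S ω) (Y ω)]
    _ = _ := by
      rw [integral_add hSprod (hYp.const_mul 2), integral_add hSp hprod,
        integral_const_mul, integral_const_mul,
        hψSY.integral_fun_mul_eq_mul_integral hψS.1 hY.1, mul_assoc]

lemma integral_abs_sub_integral_rpow_le (hp1 : 1 ≤ p) (hp2 : p ≤ 2) {X : Ω → ℝ}
    (hX : MemLp X (ENNReal.ofReal p) P) :
    ∫ ω, |X ω - ∫ ω', X ω' ∂P| ^ p ∂P ≤ 2 * ∫ ω, |X ω| ^ p ∂P := by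
  have h := integral_abs_add_rpow_le hp1 hp2 (memLp_const (-∫ ω, X ω ∂P)) hX
    (indepFun_const_left _ X)
  set m := ∫ ω, X ω ∂P
  have hψm : signedRpow (p - 1) (-m) * m = -|m| ^ p := by
    rw [signedRpow_neg, neg_mul, signedRpow_mul_self (by linarith), sub_add_cancel]
  simp only [integral_const, probReal_univ, one_smul, abs_neg, neg_add_eq_sub] at h
  rw [mul_assoc, hψm] at h
  have := mul_le_mul_of_nonneg_right hp1 (rpow_nonneg (abs_nonneg m) p)
  linarith

theorem integral_abs_sum_rpow_le {ι : Type*} (hp1 : 1 ≤ p) (hp2 : p ≤ 2)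
    {Y : ι → Ω → ℝ} (hY : ∀ i, MemLp (Y i) (ENNReal.ofReal p) P)
    (hY0 : ∀ i, ∫ ω, Y i ω ∂P = 0)
    (hindep : iIndepFun Y P) (s : Finset ι) :
    ∫ ω, |∑ i ∈ s, Y i ω| ^ p ∂P ≤ 2 * ∑ i ∈ s, ∫ ω, |Y i ω| ^ p ∂P := by
  classical
  induction s using Finset.induction_on with
  | empty => simp [zero_rpow (by linarith : p ≠ 0)]
  | insert a s ha ih =>
    have h := integral_abs_add_rpow_le hp1 hp2 (memLp_finsetSum' s fun i _ => hY i) (hY a)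
      (hindep.indepFun_finsetSum_of_notMem₀ (fun i => (hY i).1.aemeasurable) ha)
    simp only [Finset.sum_apply, hY0 a, mul_zero, add_zero] at h
    simp only [Finset.sum_insert ha, add_comm (Y a _)]
    linarith

end Moments

lemma LipschitzWith.norm_integral_comp_sub_le {Ω E F : Type*} [MeasurableSpace Ω]
    {P : Measure Ω} [IsProbabilityMeasure P] [NormedAddCommGroup E] [NormedAddCommGroup F]
    [NormedSpace ℝ F] [CompleteSpace F] {φ : E → F} {L : NNReal} (hφ : LipschitzWith L φ)
    {T : Ω → E} (hT : Integrable T P) (c : E) :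
    ‖∫ ω, φ (T ω) ∂P - φ c‖ ≤ L * ∫ ω, ‖T ω - c‖ ∂P := by
  have hdev : Integrable (fun ω => (L : ℝ) * ‖T ω - c‖) P :=
    (hT.sub (integrable_const c)).norm.const_mul _
  have hφT : Integrable (fun ω => φ (T ω)) P := by
    refine ((integrable_const ‖φ c‖).add hdev).mono'
      (hφ.continuous.comp_aestronglyMeasurable hT.1) (ae_of_all _ fun ω => ?_)
    calc ‖φ (T ω)‖ ≤ ‖φ c‖ + ‖φ (T ω) - φ c‖ := norm_le_norm_add_norm_sub' _ _
      _ ≤ ‖φ c‖ + L * ‖T ω - c‖ := by gcongr; exact hφ.norm_sub_le _ _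
  calc ‖∫ ω, φ (T ω) ∂P - φ c‖ = ‖∫ ω, (φ (T ω) - φ c) ∂P‖ := by
        rw [integral_sub hφT (integrable_const _), integral_const, probReal_univ, one_smul]
    _ ≤ ∫ ω, ‖φ (T ω) - φ c‖ ∂P := norm_integral_le_integral_norm _
    _ ≤ ∫ ω, (L : ℝ) * ‖T ω - c‖ ∂P :=
        integral_mono (hφT.sub (integrable_const _)).norm hdev fun ω => hφ.norm_sub_le _ _
    _ = L * ∫ ω, ‖T ω - c‖ ∂P := integral_const_mul _ _

section SampleMean

variable {Ω ι : Type*} [MeasurableSpace Ω] {P : Measure Ω} [IsProbabilityMeasure P]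
  [Fintype ι] [Nonempty ι] {p μ C : ℝ} {X : ι → Ω → ℝ}

theorem integral_abs_sum_div_card_sub_rpow_le (hp1 : 1 ≤ p) (hp2 : p ≤ 2)
    (hX : ∀ i, MemLp (X i) (ENNReal.ofReal p) P) (hindep : iIndepFun X P)
    (hmean : ∀ i, ∫ ω, X i ω ∂P = μ) (hmom : ∀ i, ∫ ω, |X i ω| ^ p ∂P ≤ C) :
    ∫ ω, |(∑ i, X i ω) / Fintype.card ι - μ| ^ p ∂P
      ≤ 4 * C / (Fintype.card ι : ℝ) ^ (p - 1) := by
  set n : ℝ := (Fintype.card ι : ℝ)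
  have hn : 0 < n := by simp [n, Fintype.card_pos]
  set Y : ι → Ω → ℝ := fun i ω => X i ω - μ
  have hY0 : ∀ i, ∫ ω, Y i ω ∂P = 0 := fun i => by
    simp [Y, integral_sub ((hX i).integrable (by simpa using hp1)) (integrable_const μ), hmean i]
  have hYmom : ∀ i, ∫ ω, |Y i ω| ^ p ∂P ≤ 2 * C := fun i => by
    have := integral_abs_sub_integral_rpow_le hp1 hp2 (hX i)
    rw [hmean i] at this
    linarith [hmom i]
  have hsum : ∀ ω, (∑ i, X i ω) / n - μ = (∑ i, Y i ω) / n := fun ω => by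
    simp only [Y, Finset.sum_sub_distrib, Finset.sum_const, Finset.card_univ, nsmul_eq_mul, n]
    field_simp
  simp_rw [hsum, abs_div, abs_of_pos hn, div_rpow (abs_nonneg _) hn.le, integral_div]
  calc (∫ ω, |∑ i, Y i ω| ^ p ∂P) / n ^ p
      ≤ (2 * ∑ _i : ι, 2 * C) / n ^ p := by
        gcongr
        exact (integral_abs_sum_rpow_le hp1 hp2 (fun i => (hX i).sub (memLp_const μ)) hY0
          (hindep.comp _ fun _ => measurable_id.sub_const μ) _).trans
          (by gcongr with i; exact hYmom i)
    _ = 4 * C / n ^ (p - 1) := by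
      rw [rpow_sub_one hn.ne']
      simp only [Finset.sum_const, Finset.card_univ, nsmul_eq_mul]
      field_simp
      ring

theorem integral_abs_sum_div_card_sub_le (hp1 : 1 ≤ p) (hp2 : p ≤ 2)
    (hX : ∀ i, MemLp (X i) (ENNReal.ofReal p) P) (hindep : iIndepFun X P)
    (hmean : ∀ i, ∫ ω, X i ω ∂P = μ) (hmom : ∀ i, ∫ ω, |X i ω| ^ p ∂P ≤ C) :
    ∫ ω, |(∑ i, X i ω) / Fintype.card ι - μ| ∂P
      ≤ (4 * C / (Fintype.card ι : ℝ) ^ (p - 1)) ^ (1 / p) := by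
  have hdev : MemLp (fun ω => (∑ i, X i ω) / Fintype.card ι - μ) (ENNReal.ofReal p) P := by
    simpa [div_eq_mul_inv, Pi.sub_def] using
      ((memLp_finsetSum _ fun i _ => hX i).mul_const (Fintype.card ι : ℝ)⁻¹).sub
        (memLp_const μ)
  refine (integral_abs_le_rpow_integral_abs_rpow hp1 hdev).trans ?_
  gcongr
  exact integral_abs_sum_div_card_sub_rpow_le hp1 hp2 hX hindep hmean hmom

end SampleMean

theorem lln_rate_classical_general
    {Ω : Type*} [MeasurableSpace Ω] (P : Measure Ω) [IsProbabilityMeasure P]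
    (n : ℕ) (hn : 1 ≤ n) (X : Fin n → Ω → ℝ)
    (hindep : iIndepFun X P)
    (hint : ∀ i, Integrable (X i) P)
    (μ : ℝ) (hmean : ∀ i, ∫ ω, X i ω ∂P = μ)
    (α : ℝ) (hα : α ∈ Set.Ioc (0 : ℝ) 1) (Cα : ℝ)
    (hmom : ∀ i, Integrable (fun ω => |X i ω| ^ (1 + α)) P ∧
      ∫ ω, |X i ω| ^ (1 + α) ∂P ≤ Cα)
    (φ : ℝ → ℝ) (L : NNReal) (hφ : LipschitzWith L φ) :
    |∫ ω, φ ((∑ i, X i ω) / n) ∂P - φ μ| ≤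
      (L : ℝ) * (4 * Cα / (n : ℝ) ^ α) ^ (1 / (1 + α)) := by
  have : Nonempty (Fin n) := ⟨⟨0, hn⟩⟩
  have hX : ∀ i, MemLp (X i) (ENNReal.ofReal (1 + α)) P := fun i =>
    (memLp_ofReal_iff_integrable_abs_rpow (hint i).1 (by linarith [hα.1])).2 (hmom i).1
  have hL1 := integral_abs_sum_div_card_sub_le (by linarith [hα.1]) (by linarith [hα.2]) hX
    hindep hmean fun i => (hmom i).2
  rw [Fintype.card_fin, add_sub_cancel_left] at hL1
  calc |∫ ω, φ ((∑ i, X i ω) / n) ∂P - φ μ|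
      ≤ L * ∫ ω, |(∑ i, X i ω) / n - μ| ∂P :=
        hφ.norm_integral_comp_sub_le ((integrable_finsetSum _ fun i _ => hint i).div_const _) μ
    _ ≤ L * (4 * Cα / (n : ℝ) ^ α) ^ (1 / (1 + α)) := by gcongr

/-- Classical corollary: for independent integrable random variables with common
mean `μ` and `(1+α)`-moments bounded by `C_α`,
`|E[φ(S_n/n)] - φ(μ)| ≤ L (4C_α / n^α)^{1/(1+α)}` for Lipschitz `φ`. -/
theorem lln_rate_classical
    {Ω : Type*} [MeasurableSpace Ω] (P : Measure Ω) [IsProbabilityMeasure P]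
    (n : ℕ) (hn : 1 ≤ n) (X : Fin n → Ω → ℝ)
    (hmeas : ∀ i, Measurable (X i))
    (hindep : iIndepFun X P)
    (hint : ∀ i, Integrable (X i) P)
    (μ : ℝ) (hmean : ∀ i, ∫ ω, X i ω ∂P = μ)
    (α : ℝ) (hα : α ∈ Set.Ioc (0 : ℝ) 1) (Cα : ℝ) (hCα : 0 < Cα)
    (hmom : ∀ i, Integrable (fun ω => |X i ω| ^ (1 + α)) P ∧
      ∫ ω, |X i ω| ^ (1 + α) ∂P ≤ Cα)
    (φ : ℝ → ℝ) (L : NNReal) (hφ : LipschitzWith L φ) :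
    |∫ ω, φ ((∑ i, X i ω) / n) ∂P - φ μ| ≤
      (L : ℝ) * (4 * Cα / (n : ℝ) ^ α) ^ (1 / (1 + α)) :=
  lln_rate_classical_general P n hn X hindep hint μ hmean α hα Cα hmom φ L hφ
end

section
/- Let (Ω, F, P) be a probability space with a filtration F_0 ⊆ F_1 ⊆ ⋯ ⊆ F_n, and let X_1,…,X_n be square-integrable random variables with X_i F_i-measurable, satisfying μ̲ ≤ E[X_i | F_{i−1}] ≤ μ̄ almost surely and E[(X_i − E[X_i | F_{i−1}])²] ≤ σ² for all i ≤ n. Then for every Lipschitz function φ : ℝ → ℝ with Lipschitz constant L, E[φ(S_n/n)] − max_{r∈[μ̲,μ̄]} φ(r) ≤ L σ/√n, where S_n := X_1 + ⋯ + X_n. -/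
/-!
The martingale differences `dᵢ = Xᵢ - E[Xᵢ | ℱᵢ₋₁]` are orthogonal in `L²`, since `dᵢ` is
`ℱⱼ₋₁`-measurable for `i < j` and `E[dⱼ | ℱⱼ₋₁] = 0`. Hence `D = ∑ dᵢ` has second moment at most
`nσ²` and, by Jensen, `E|D| ≤ √n σ`. Pointwise, `Sₙ/n - D/n` is the average of the conditional
means, a point of `[μ̲, μ̄]`, so the Lipschitz bound gives
`φ(Sₙ/n) ≤ max_{[μ̲, μ̄]} φ + L |D| / n`; integrating yields the claim.
-/

open MeasureTheory Finset
open scoped NNReal BigOperators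

section Orthogonality

variable {Ω : Type*} {m m0 : MeasurableSpace Ω} {μ : Measure Ω}

lemma integral_mul_eq_zero_of_condExp_ae_eq_zero (hm : m ≤ m0) [SigmaFinite (μ.trim hm)]
    {f g : Ω → ℝ} (hf : StronglyMeasurable[m] f) (hfg : Integrable (f * g) μ)
    (hg : Integrable g μ) (hg0 : μ[g | m] =ᵐ[μ] 0) :
    ∫ ω, f ω * g ω ∂μ = 0 := by
  have hfg0 : μ[f * g | m] =ᵐ[μ] 0 := by
    filter_upwards [condExp_mul_of_stronglyMeasurable_left hf hfg hg, hg0] with ω h h0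
    simp [h, h0]
  calc ∫ ω, f ω * g ω ∂μ = ∫ ω, μ[f * g | m] ω ∂μ := (integral_condExp hm).symm
    _ = 0 := by simp [integral_congr_ae hfg0]

lemma integral_sq_sum_eq_sum_integral_sq {ι : Type*} (s : Finset ι) {d : ι → Ω → ℝ}
    (hd : ∀ i ∈ s, MemLp (d i) 2 μ)
    (horth : ∀ i ∈ s, ∀ j ∈ s, i ≠ j → ∫ ω, d i ω * d j ω ∂μ = 0) :
    ∫ ω, (∑ i ∈ s, d i ω) ^ 2 ∂μ = ∑ i ∈ s, ∫ ω, d i ω ^ 2 ∂μ := by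
  have hprod : ∀ i ∈ s, ∀ j ∈ s, Integrable (fun ω => d i ω * d j ω) μ :=
    fun i hi j hj => (hd i hi).integrable_mul (hd j hj)
  simp_rw [sq, sum_mul_sum]
  rw [integral_finsetSum s fun i hi => integrable_finsetSum s (hprod i hi)]
  refine sum_congr rfl fun i hi => ?_
  rw [integral_finsetSum s (hprod i hi)]
  exact sum_eq_single_of_mem i hi fun j hj hji => horth i hi j hj hji.symm

end Orthogonality

section MartingaleDiff

variable {Ω : Type*} {m0 : MeasurableSpace Ω} {μ : Measure Ω}

/-- With truncated `i - 1`, at `i = 0` this is `X 0 - μ[X 0 | ℱ 0]`. -/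
noncomputable def martingaleDiff (μ : Measure Ω) (ℱ : Filtration ℕ m0) (X : ℕ → Ω → ℝ) (i : ℕ) :
    Ω → ℝ :=
  X i - μ[X i | ℱ (i - 1)]

variable {ℱ : Filtration ℕ m0} {X : ℕ → Ω → ℝ} {i j : ℕ}

lemma memLp_martingaleDiff [IsFiniteMeasure μ] {p : ENNReal} (hp : 1 ≤ p)
    (hX : MemLp (X i) p μ) :
    MemLp (martingaleDiff μ ℱ X i) p μ :=
  hX.sub (hX.condExp hp)

lemma stronglyMeasurable_martingaleDiff (hX : StronglyMeasurable[ℱ i] (X i)) :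
    StronglyMeasurable[ℱ i] (martingaleDiff μ ℱ X i) :=
  hX.sub (stronglyMeasurable_condExp.mono (ℱ.mono (Nat.sub_le i 1)))

lemma condExp_martingaleDiff [SigmaFiniteFiltration μ ℱ] (hX : Integrable (X i) μ) :
    μ[martingaleDiff μ ℱ X i | ℱ (i - 1)] =ᵐ[μ] 0 := by
  have hidem : μ[μ[X i | ℱ (i - 1)] | ℱ (i - 1)] = μ[X i | ℱ (i - 1)] :=
    condExp_of_stronglyMeasurable (ℱ.le _) stronglyMeasurable_condExp integrable_condExp
  filter_upwards [condExp_sub hX (integrable_condExp (m := ℱ (i - 1)) (f := X i)) (ℱ (i - 1))]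
    with ω h
  simp [martingaleDiff, h, hidem]

lemma integral_mul_martingaleDiff_eq_zero [IsFiniteMeasure μ] (hij : i < j)
    (hXi : StronglyMeasurable[ℱ i] (X i)) (hXi2 : MemLp (X i) 2 μ) (hXj2 : MemLp (X j) 2 μ) :
    ∫ ω, martingaleDiff μ ℱ X i ω * martingaleDiff μ ℱ X j ω ∂μ = 0 := by
  have hdi := memLp_martingaleDiff (ℱ := ℱ) one_le_two hXi2
  have hdj := memLp_martingaleDiff (ℱ := ℱ) one_le_two hXj2
  exact integral_mul_eq_zero_of_condExp_ae_eq_zero (ℱ.le _)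
    ((stronglyMeasurable_martingaleDiff hXi).mono (ℱ.mono (Nat.le_sub_one_of_lt hij)))
    (hdi.integrable_mul hdj) (hdj.integrable one_le_two)
    (condExp_martingaleDiff (hXj2.integrable one_le_two))

lemma integral_sq_sum_martingaleDiff [IsFiniteMeasure μ] (s : Finset ℕ)
    (hX : ∀ i ∈ s, StronglyMeasurable[ℱ i] (X i)) (hX2 : ∀ i ∈ s, MemLp (X i) 2 μ) :
    ∫ ω, (∑ i ∈ s, martingaleDiff μ ℱ X i ω) ^ 2 ∂μ =
      ∑ i ∈ s, ∫ ω, martingaleDiff μ ℱ X i ω ^ 2 ∂μ := by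
  refine integral_sq_sum_eq_sum_integral_sq s
    (fun i hi => memLp_martingaleDiff one_le_two (hX2 i hi)) fun i hi j hj hij => ?_
  rcases hij.lt_or_gt with h | h
  · exact integral_mul_martingaleDiff_eq_zero h (hX i hi) (hX2 i hi) (hX2 j hj)
  · simp_rw [mul_comm (martingaleDiff μ ℱ X i _)]
    exact integral_mul_martingaleDiff_eq_zero h (hX j hj) (hX2 j hj) (hX2 i hi)

lemma integral_abs_le_sqrt_integral_sq [IsProbabilityMeasure μ] {f : Ω → ℝ} (hf : MemLp f 2 μ) :
    ∫ ω, |f ω| ∂μ ≤ √(∫ ω, f ω ^ 2 ∂μ) := by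
  rw [Real.le_sqrt (integral_nonneg fun ω => abs_nonneg _) (integral_nonneg fun ω => sq_nonneg _)]
  have := ProbabilityTheory.variance_nonneg (fun ω => |f ω|) μ
  rw [ProbabilityTheory.variance_eq_sub (X := fun ω => |f ω|) hf.abs] at this
  simpa using this

lemma integral_abs_sum_martingaleDiff_le [IsProbabilityMeasure μ] (s : Finset ℕ)
    (hX : ∀ i ∈ s, StronglyMeasurable[ℱ i] (X i)) (hX2 : ∀ i ∈ s, MemLp (X i) 2 μ) {σ : ℝ}
    (hσ : 0 ≤ σ) (hvar : ∀ i ∈ s, ∫ ω, martingaleDiff μ ℱ X i ω ^ 2 ∂μ ≤ σ ^ 2) :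
    ∫ ω, |∑ i ∈ s, martingaleDiff μ ℱ X i ω| ∂μ ≤ √(#s : ℝ) * σ := by
  have hsecond : ∫ ω, (∑ i ∈ s, martingaleDiff μ ℱ X i ω) ^ 2 ∂μ ≤ #s * σ ^ 2 := by
    rw [integral_sq_sum_martingaleDiff s hX hX2]
    simpa using sum_le_sum hvar
  calc _ ≤ √(∫ ω, (∑ i ∈ s, martingaleDiff μ ℱ X i ω) ^ 2 ∂μ) :=
        integral_abs_le_sqrt_integral_sq
          (memLp_finsetSum s fun i hi => memLp_martingaleDiff one_le_two (hX2 i hi))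
    _ ≤ √(#s * σ ^ 2) := Real.sqrt_le_sqrt hsecond
    _ = √(#s : ℝ) * σ := by rw [Real.sqrt_mul (Nat.cast_nonneg _), Real.sqrt_sq hσ]

end MartingaleDiff

lemma LipschitzWith.le_sSup_image_add_mul_dist {α : Type*} [PseudoMetricSpace α] {L : ℝ≥0}
    {φ : α → ℝ} (hφ : LipschitzWith L φ) {K : Set α} (hK : BddAbove (φ '' K)) {a : α}
    (ha : a ∈ K) (x : α) : φ x ≤ sSup (φ '' K) + L * dist x a := by
  have h1 : φ x - φ a ≤ L * dist x a := (le_abs_self _).trans (hφ.dist_le_mul x a)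
  have h2 : φ a ≤ sSup (φ '' K) := le_csSup hK (Set.mem_image_of_mem φ ha)
  linarith

lemma LipschitzWith.apply_expect_le {ι : Type*} {s : Finset ι} (hs : s.Nonempty) {L : ℝ≥0}
    {φ : ℝ → ℝ} (hφ : LipschitzWith L φ) {lo hi : ℝ} {x c : ι → ℝ}
    (hc : ∀ i ∈ s, c i ∈ Set.Icc lo hi) :
    φ (𝔼 i ∈ s, x i) ≤ sSup (φ '' Set.Icc lo hi) + L * |𝔼 i ∈ s, (x i - c i)| := by
  have hmem : 𝔼 i ∈ s, c i ∈ Set.Icc lo hi :=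
    ⟨le_expect hs fun i hi => (hc i hi).1, expect_le hs fun i hi => (hc i hi).2⟩
  have := hφ.le_sSup_image_add_mul_dist
    (isCompact_Icc.image hφ.continuous).bddAbove hmem (𝔼 i ∈ s, x i)
  rwa [Real.dist_eq, ← expect_sub_distrib] at this

lemma LipschitzWith.integrable_comp {Ω E F : Type*} {m0 : MeasurableSpace Ω} {μ : Measure Ω}
    [IsFiniteMeasure μ] [NormedAddCommGroup E] [NormedAddCommGroup F] {K : ℝ≥0} {φ : E → F}
    (hφ : LipschitzWith K φ) {f : Ω → E} (hf : Integrable f μ) :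
    Integrable (φ ∘ f) μ := by
  have h0 : Integrable ((fun x => φ x - φ 0) ∘ f) μ :=
    memLp_one_iff_integrable.1 <|
      (hφ.sub (LipschitzWith.const (φ 0))).comp_memLp (by simp) (memLp_one_iff_integrable.2 hf)
  refine (h0.add (integrable_const (φ 0))).congr (ae_of_all _ fun ω => ?_)
  simp

theorem lln_rate_adapted_variance_general
    {Ω : Type*} [MeasurableSpace Ω] (P : Measure Ω) [IsProbabilityMeasure P]
    (n : ℕ) (hn : 1 ≤ n) (ℱ : ℕ → MeasurableSpace Ω)
    (hℱ_mono : Monotone ℱ) (hℱ_le : ∀ i, ℱ i ≤ ‹MeasurableSpace Ω›)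
    (X : ℕ → Ω → ℝ)
    (hmeas : ∀ i ∈ Finset.Icc 1 n, Measurable[ℱ i] (X i))
    (hL2 : ∀ i ∈ Finset.Icc 1 n, MemLp (X i) 2 P)
    (μlow μbar : ℝ)
    (hcond : ∀ i ∈ Finset.Icc 1 n,
      ∀ᵐ ω ∂P, μlow ≤ (P[X i | ℱ (i - 1)]) ω ∧ (P[X i | ℱ (i - 1)]) ω ≤ μbar)
    (σ : ℝ) (hσ : 0 ≤ σ)
    (hvar : ∀ i ∈ Finset.Icc 1 n,
      ∫ ω, (X i ω - (P[X i | ℱ (i - 1)]) ω) ^ 2 ∂P ≤ σ ^ 2)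
    (φ : ℝ → ℝ) (L : NNReal) (hφ : LipschitzWith L φ) :
    ∫ ω, φ ((∑ i ∈ Finset.Icc 1 n, X i ω) / n) ∂P -
        sSup (φ '' Set.Icc μlow μbar) ≤
      (L : ℝ) * σ / Real.sqrt n := by
  let 𝓕 : Filtration ℕ _ := ⟨ℱ, hℱ_mono, hℱ_le⟩
  set s := Finset.Icc 1 n
  set D : Ω → ℝ := fun ω => ∑ i ∈ s, martingaleDiff P 𝓕 X i ω
  have hn0 : (0 : ℝ) < n := by exact_mod_cast hn
  have hcard : (#s : ℝ) = n := by simp [s]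
  have hD : MemLp D 2 P := memLp_finsetSum s fun i hi => memLp_martingaleDiff one_le_two (hL2 i hi)
  have hfirst : ∫ ω, |D ω| ∂P ≤ √n * σ := by
    simpa [hcard] using integral_abs_sum_martingaleDiff_le (ℱ := 𝓕) s
      (fun i hi => (hmeas i hi).stronglyMeasurable) hL2 hσ hvar
  have hpointwise : ∀ᵐ ω ∂P, φ ((∑ i ∈ s, X i ω) / n) ≤
      sSup (φ '' Set.Icc μlow μbar) + L / n * |D ω| := by
    filter_upwards [(ae_ball_iff s.countable_toSet).2 hcond] with ω hω
    have := hφ.apply_expect_le (by simpa [s] using hn) (x := fun i => X i ω) hω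
    rw [expect_eq_sum_div_card, expect_eq_sum_div_card, hcard, abs_div, abs_of_pos hn0] at this
    convert this using 2
    simp only [D, martingaleDiff, Pi.sub_apply]
    ring
  have hS : Integrable (fun ω => (∑ i ∈ s, X i ω) / n) P :=
    (integrable_finsetSum s fun i hi => (hL2 i hi).integrable one_le_two).div_const _
  have hbound : Integrable (fun ω => L / n * |D ω|) P :=
    (hD.integrable one_le_two).abs.const_mul _
  have hmean : ∫ ω, φ ((∑ i ∈ s, X i ω) / n) ∂P ≤
      ∫ ω, (sSup (φ '' Set.Icc μlow μbar) + L / n * |D ω|) ∂P :=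
    integral_mono_ae (hφ.integrable_comp hS) ((integrable_const _).add hbound) hpointwise
  rw [integral_add (integrable_const _) hbound, integral_const_mul, integral_const, probReal_univ,
    one_smul] at hmean
  calc _ ≤ L / n * ∫ ω, |D ω| ∂P := by linarith
    _ ≤ L / n * (√n * σ) := by gcongr
    _ = L * σ / √n := by
      field_simp
      rw [Real.sq_sqrt hn0.le]

/-- One-sided LLN estimate with variance-type bound: if the conditional means lie
in `[μ̲, μ̄]` and the conditional variances are bounded by `σ²`, then
`E[φ(S_n/n)] - max_{r∈[μ̲,μ̄]} φ(r) ≤ L σ / √n`. -/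
theorem lln_rate_adapted_variance
    {Ω : Type*} [MeasurableSpace Ω] (P : Measure Ω) [IsProbabilityMeasure P]
    (n : ℕ) (hn : 1 ≤ n) (ℱ : ℕ → MeasurableSpace Ω)
    (hℱ_mono : Monotone ℱ) (hℱ_le : ∀ i, ℱ i ≤ ‹MeasurableSpace Ω›)
    (X : ℕ → Ω → ℝ)
    (hmeas : ∀ i ∈ Finset.Icc 1 n, Measurable[ℱ i] (X i))
    (hL2 : ∀ i ∈ Finset.Icc 1 n, MemLp (X i) 2 P)
    (μlow μbar : ℝ) (hμ : μlow ≤ μbar)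
    (hcond : ∀ i ∈ Finset.Icc 1 n,
      ∀ᵐ ω ∂P, μlow ≤ (P[X i | ℱ (i - 1)]) ω ∧ (P[X i | ℱ (i - 1)]) ω ≤ μbar)
    (σ : ℝ) (hσ : 0 ≤ σ)
    (hvar : ∀ i ∈ Finset.Icc 1 n,
      ∫ ω, (X i ω - (P[X i | ℱ (i - 1)]) ω) ^ 2 ∂P ≤ σ ^ 2)
    (φ : ℝ → ℝ) (L : NNReal) (hφ : LipschitzWith L φ) :
    ∫ ω, φ ((∑ i ∈ Finset.Icc 1 n, X i ω) / n) ∂P -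
        sSup (φ '' Set.Icc μlow μbar) ≤
      (L : ℝ) * σ / Real.sqrt n :=
  lln_rate_adapted_variance_general P n hn ℱ hℱ_mono hℱ_le X hmeas hL2 μlow μbar hcond σ hσ hvar φ L
    hφ
end

section
/- Let (Ω, F, P) be a probability space with a filtration F_0 ⊆ F_1 ⊆ ⋯ ⊆ F_n, and let X_1,…,X_n be square-integrable random variables with X_i F_i-measurable, satisfying μ̲ ≤ E[X_i | F_{i−1}] ≤ μ̄ almost surely for all i ≤ n. Suppose σ̄² is such that inf_{μ∈[μ̲,μ̄]} E[(X_i − μ)²] ≤ σ̄² for every i ≤ n. Then E[d²_{[μ̲,μ̄]}(S_n/n)] ≤ σ̄²/n, where S_n := X_1 + ⋯ + X_n and d_{[μ̲,μ̄]}(x) := inf_{y∈[μ̲,μ̄]} |x − y|. -/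
/-!
Write `Xᵢ = Mᵢ + Yᵢ` with `Mᵢ = E[Xᵢ | ℱᵢ₋₁] ∈ [μ̲, μ̄]`. The average of the `Mᵢ` lies in the
interval, so the distance of `Sₙ/n` to it is at most `|∑ Yᵢ| / n`. The `Yᵢ` are martingale
differences, hence orthogonal in `L²`, so `E[(∑ Yᵢ)²] = ∑ E[Yᵢ²]`; and since `Xᵢ - Mᵢ` is
orthogonal to every `ℱᵢ₋₁`-measurable function, `E[Yᵢ²] ≤ E[(Xᵢ - μ)²]` for every constant `μ`,
so `E[Yᵢ²] ≤ σ̄²`.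
-/

open MeasureTheory

section
variable {Ω : Type*} {m m₀ : MeasurableSpace Ω} {P : Measure Ω}

theorem integral_add_sq_of_integral_mul_eq_zero {f g : Ω → ℝ} (hf : MemLp f 2 P)
    (hg : MemLp g 2 P) (hfg : ∫ ω, f ω * g ω ∂P = 0) :
    ∫ ω, (f ω + g ω) ^ 2 ∂P = ∫ ω, f ω ^ 2 ∂P + ∫ ω, g ω ^ 2 ∂P := by
  have hexpand : ∀ ω, (f ω + g ω) ^ 2 = f ω ^ 2 + 2 * (f ω * g ω) + g ω ^ 2 := fun ω => by ring
  have hf2 : Integrable (fun ω => f ω ^ 2) P := hf.integrable_sq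
  have hfg2 : Integrable (fun ω => 2 * (f ω * g ω)) P := (hf.integrable_mul hg).const_mul 2
  simp_rw [hexpand]
  rw [integral_add (f := fun ω => f ω ^ 2 + 2 * (f ω * g ω)) (hf2.add hfg2) hg.integrable_sq,
    integral_add hf2 hfg2, integral_const_mul, hfg, mul_zero, add_zero]

theorem integral_sq_sum_of_pairwise_integral_mul_eq_zero {ι : Type*} {s : Finset ι}
    {Y : ι → Ω → ℝ} (hY : ∀ i ∈ s, MemLp (Y i) 2 P)
    (horth : ∀ i ∈ s, ∀ j ∈ s, i ≠ j → ∫ ω, Y i ω * Y j ω ∂P = 0) :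
    ∫ ω, (∑ i ∈ s, Y i ω) ^ 2 ∂P = ∑ i ∈ s, ∫ ω, Y i ω ^ 2 ∂P := by
  classical
  induction s using Finset.induction_on with
  | empty => simp
  | insert a s ha ih =>
    have hYs : ∀ i ∈ s, MemLp (Y i) 2 P := fun i hi => hY i (Finset.mem_insert_of_mem hi)
    have hYa : MemLp (Y a) 2 P := hY a (Finset.mem_insert_self a s)
    have hsum : MemLp (fun ω => ∑ i ∈ s, Y i ω) 2 P := memLp_finsetSum s hYs
    have hcross : ∫ ω, Y a ω * ∑ i ∈ s, Y i ω ∂P = 0 := by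
      simp_rw [Finset.mul_sum]
      rw [integral_finsetSum (f := fun i ω => Y a ω * Y i ω) s
        fun i hi => hYa.integrable_mul (hYs i hi)]
      refine Finset.sum_eq_zero fun i hi => horth a (Finset.mem_insert_self a s) i
        (Finset.mem_insert_of_mem hi) (ne_of_mem_of_not_mem hi ha).symm
    simp_rw [Finset.sum_insert ha]
    rw [integral_add_sq_of_integral_mul_eq_zero hYa hsum hcross,
      ih hYs fun i hi j hj => horth i (Finset.mem_insert_of_mem hi) j (Finset.mem_insert_of_mem hj)]

theorem MeasureTheory.MemLp.sub_condExp {p : ENNReal} (hp : 1 ≤ p) {f : Ω → ℝ} (hf : MemLp f p P) :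
    MemLp (f - P[f|m]) p P :=
  hf.sub (hf.condExp hp)

theorem integral_mul_eq_zero_of_condExp_ae_eq_zero_s12 (hm : m ≤ m₀) [IsFiniteMeasure P]
    {f g : Ω → ℝ} (hf_meas : StronglyMeasurable[m] f) (hf : MemLp f 2 P) (hg : MemLp g 2 P)
    (hg_condExp : P[g|m] =ᵐ[P] 0) :
    ∫ ω, f ω * g ω ∂P = 0 := by
  have hfg : P[f * g|m] =ᵐ[P] 0 := by
    filter_upwards [condExp_mul_of_stronglyMeasurable_left hf_meas (hf.integrable_mul hg)
      (hg.integrable one_le_two), hg_condExp] with ω hpull hzero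
    simp [hpull, hzero]
  calc ∫ ω, f ω * g ω ∂P = ∫ ω, (P[f * g|m]) ω ∂P := (integral_condExp hm).symm
    _ = 0 := integral_eq_zero_of_ae hfg

theorem condExp_sub_condExp_ae_eq_zero (hm : m ≤ m₀) [SigmaFinite (P.trim hm)] {f : Ω → ℝ}
    (hf : Integrable f P) :
    P[f - P[f|m]|m] =ᵐ[P] 0 := by
  have hidem : P[P[f|m]|m] = P[f|m] :=
    condExp_of_stronglyMeasurable hm stronglyMeasurable_condExp integrable_condExp
  filter_upwards [condExp_sub hf (integrable_condExp (m := m) (f := f)) m] with ω hsub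
  simp [hsub, hidem]

theorem integral_sq_sub_condExp_le (hm : m ≤ m₀) [IsFiniteMeasure P] {f z : Ω → ℝ}
    (hf : MemLp f 2 P) (hz_meas : StronglyMeasurable[m] z) (hz : MemLp z 2 P) :
    ∫ ω, (f ω - (P[f|m]) ω) ^ 2 ∂P ≤ ∫ ω, (f ω - z ω) ^ 2 ∂P := by
  have hcz : MemLp (P[f|m] - z) 2 P := (hf.condExp one_le_two).sub hz
  have horth : ∫ ω, ((P[f|m]) ω - z ω) * (f ω - (P[f|m]) ω) ∂P = 0 :=
    integral_mul_eq_zero_of_condExp_ae_eq_zero_s12 hm (stronglyMeasurable_condExp.sub hz_meas) hcz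
      (hf.sub_condExp one_le_two)
      (condExp_sub_condExp_ae_eq_zero hm (hf.integrable one_le_two))
  have hpyth := integral_add_sq_of_integral_mul_eq_zero hcz (hf.sub_condExp one_le_two) horth
  simp only [Pi.sub_apply, sub_add_sub_cancel'] at hpyth
  rw [hpyth]
  exact le_add_of_nonneg_left (integral_nonneg fun ω => sq_nonneg _)

theorem integral_sq_sum_sub_condExp_pred [IsFiniteMeasure P] {ℱ : ℕ → MeasurableSpace Ω}
    (hℱ_mono : Monotone ℱ) (hℱ_le : ∀ i, ℱ i ≤ m₀) {X : ℕ → Ω → ℝ} {s : Finset ℕ}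
    (hmeas : ∀ i ∈ s, Measurable[ℱ i] (X i)) (hL2 : ∀ i ∈ s, MemLp (X i) 2 P) :
    ∫ ω, (∑ i ∈ s, (X i ω - (P[X i|ℱ (i - 1)]) ω)) ^ 2 ∂P
      = ∑ i ∈ s, ∫ ω, (X i ω - (P[X i|ℱ (i - 1)]) ω) ^ 2 ∂P := by
  refine integral_sq_sum_of_pairwise_integral_mul_eq_zero
    (fun i hi => (hL2 i hi).sub_condExp one_le_two) fun i hi j hj hij => ?_
  wlog hlt : i < j generalizing i j
  · simpa only [mul_comm] using this j hj i hi hij.symm (hij.symm.lt_of_le (not_lt.1 hlt))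
  have hi_meas : StronglyMeasurable[ℱ (j - 1)] (X i - P[X i|ℱ (i - 1)]) :=
    ((hmeas i hi).stronglyMeasurable.mono (hℱ_mono (by omega))).sub
      (stronglyMeasurable_condExp.mono (hℱ_mono (by omega)))
  exact integral_mul_eq_zero_of_condExp_ae_eq_zero_s12 (hℱ_le (j - 1)) hi_meas
    ((hL2 i hi).sub_condExp one_le_two) ((hL2 j hj).sub_condExp one_le_two)
    (condExp_sub_condExp_ae_eq_zero (hℱ_le (j - 1)) ((hL2 j hj).integrable one_le_two))

end

section
variable {ι : Type*} {s : Finset ι} {a b : ℝ} {y : ι → ℝ}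

theorem Finset.sum_div_card_mem_Icc (hs : s.Nonempty) (hy : ∀ i ∈ s, y i ∈ Set.Icc a b) :
    (∑ i ∈ s, y i) / s.card ∈ Set.Icc a b := by
  have hpos : (0 : ℝ) < s.card := by exact_mod_cast hs.card_pos
  constructor
  · rw [le_div_iff₀ hpos]
    simpa [mul_comm] using s.card_nsmul_le_sum y a fun i hi => (hy i hi).1
  · rw [div_le_iff₀ hpos]
    simpa [mul_comm] using s.sum_le_card_nsmul y b fun i hi => (hy i hi).2

theorem Metric.infDist_sum_div_card_Icc_le (hs : s.Nonempty) (hy : ∀ i ∈ s, y i ∈ Set.Icc a b)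
    (x : ι → ℝ) :
    Metric.infDist ((∑ i ∈ s, x i) / s.card) (Set.Icc a b) ≤ |∑ i ∈ s, (x i - y i)| / s.card :=
  calc _ ≤ dist ((∑ i ∈ s, x i) / s.card) ((∑ i ∈ s, y i) / s.card) :=
        Metric.infDist_le_dist_of_mem (Finset.sum_div_card_mem_Icc hs hy)
    _ = _ := by rw [Real.dist_eq, ← sub_div, abs_div, Finset.sum_sub_distrib, Nat.abs_cast]

end

/-- LLN with rate for the squared distance to `[μ̲, μ̄]`: if the conditional
means lie in `[μ̲, μ̄]` and `inf_{μ∈[μ̲,μ̄]} E[(X_i - μ)²] ≤ σ̄²`, then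
`E[d²_{[μ̲,μ̄]}(S_n/n)] ≤ σ̄²/n`. -/
theorem lln_dist_sq_adapted
    {Ω : Type*} [MeasurableSpace Ω] (P : Measure Ω) [IsProbabilityMeasure P]
    (n : ℕ) (hn : 1 ≤ n) (ℱ : ℕ → MeasurableSpace Ω)
    (hℱ_mono : Monotone ℱ) (hℱ_le : ∀ i, ℱ i ≤ ‹MeasurableSpace Ω›)
    (X : ℕ → Ω → ℝ)
    (hmeas : ∀ i ∈ Finset.Icc 1 n, Measurable[ℱ i] (X i))
    (hL2 : ∀ i ∈ Finset.Icc 1 n, MemLp (X i) 2 P)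
    (μlow μbar : ℝ) (hμ : μlow ≤ μbar)
    (hcond : ∀ i ∈ Finset.Icc 1 n,
      ∀ᵐ ω ∂P, μlow ≤ (P[X i | ℱ (i - 1)]) ω ∧ (P[X i | ℱ (i - 1)]) ω ≤ μbar)
    (σ2 : ℝ)
    (hvar : ∀ i ∈ Finset.Icc 1 n,
      sInf ((fun μ : ℝ => ∫ ω, (X i ω - μ) ^ 2 ∂P) '' Set.Icc μlow μbar) ≤ σ2) :
    ∫ ω, (Metric.infDist ((∑ i ∈ Finset.Icc 1 n, X i ω) / n)
        (Set.Icc μlow μbar)) ^ 2 ∂P ≤ σ2 / n := by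
  set Y : ℕ → Ω → ℝ := fun i ω => X i ω - (P[X i|ℱ (i - 1)]) ω
  have hcard : ((Finset.Icc 1 n).card : ℝ) = n := by simp
  have hpointwise : ∀ᵐ ω ∂P, Metric.infDist ((∑ i ∈ Finset.Icc 1 n, X i ω) / n)
      (Set.Icc μlow μbar) ^ 2 ≤ (∑ i ∈ Finset.Icc 1 n, Y i ω) ^ 2 / n ^ 2 := by
    filter_upwards [(Filter.eventually_all_finset _).2 hcond] with ω hω
    have h := Metric.infDist_sum_div_card_Icc_le (Finset.nonempty_Icc.2 hn) hω (X · ω)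
    rw [hcard] at h
    rw [← div_pow, ← sq_abs (_ / _), abs_div, Nat.abs_cast]
    exact pow_le_pow_left₀ Metric.infDist_nonneg h 2
  have hterm : ∀ i ∈ Finset.Icc 1 n, ∫ ω, Y i ω ^ 2 ∂P ≤ σ2 := fun i hi =>
    (le_csInf ((Set.nonempty_Icc.2 hμ).image _) (by
      rintro _ ⟨μ, -, rfl⟩
      exact integral_sq_sub_condExp_le (hℱ_le _) (hL2 i hi) stronglyMeasurable_const
        (memLp_const μ))).trans (hvar i hi)
  have hY2 : MemLp (fun ω => ∑ i ∈ Finset.Icc 1 n, Y i ω) 2 P :=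
    memLp_finsetSum _ fun i hi => ((hL2 i hi).sub_condExp one_le_two : MemLp (Y i) 2 P)
  calc _ ≤ ∫ ω, (∑ i ∈ Finset.Icc 1 n, Y i ω) ^ 2 / n ^ 2 ∂P :=
        integral_mono_of_nonneg (.of_forall fun ω => sq_nonneg _)
          (hY2.integrable_sq.div_const _) hpointwise
    _ = (∑ i ∈ Finset.Icc 1 n, ∫ ω, Y i ω ^ 2 ∂P) / n ^ 2 := by
        rw [integral_div, integral_sq_sum_sub_condExp_pred hℱ_mono hℱ_le hmeas hL2]
    _ ≤ (n * σ2) / n ^ 2 := by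
        gcongr
        simpa [hcard] using Finset.sum_le_card_nsmul _ _ _ hterm
    _ = σ2 / n := by field_simp
end
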